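/- arXiv:1608.06739 — 4 statements merged into one kernel-verified Lean document; each statement's English description precedes it below -/
import Mathlib

section
/- The function F is twice differentiable on the open interval (0, β) and satisfies F″(τ) = ε² F(τ) for all τ ∈ (0, β); moreover lim_{τ→0⁺} F″(τ) = (ε/2) · coth(βε/2) and F″(β/2) = ε / (2 · sinh(βε/2)). -/
open Filter

/-! On `[0, β)` the function `F` coincides with `cosh ((τ - β/2) ε) / (2 ε sinh (β ε / 2))`:
factor `exp (-β ε / 2)` out of numerator and denominator. This closed form is smooth on all of
`ℝ` with second derivative `ε²` times itself, so the limit of `F″` at `0⁺` is just its value at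
`0`, where the `cosh` factor is `cosh (β ε / 2)`; at `β / 2` that factor is `cosh 0 = 1`. -/

open Real

noncomputable def thermalGreen (β ε τ : ℝ) : ℝ :=
  cosh ((τ - β / 2) * ε) / (2 * ε * sinh (β * ε / 2))

noncomputable def thermalGreenDeriv (β ε τ : ℝ) : ℝ :=
  ε * sinh ((τ - β / 2) * ε) / (2 * ε * sinh (β * ε / 2))

lemma exp_add_exp_eq_cosh (β ε τ : ℝ) :
    exp (-τ * ε) + exp ((τ - β) * ε) = exp (-(β * ε / 2)) * (2 * cosh ((τ - β / 2) * ε)) := by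
  rw [cosh_eq, mul_div_cancel₀ _ two_ne_zero, mul_add, ← exp_add, ← exp_add]
  ring_nf

lemma one_sub_exp_neg_eq_sinh (x : ℝ) : 1 - exp (-x) = exp (-(x / 2)) * (2 * sinh (x / 2)) := by
  rw [sinh_eq, mul_div_cancel₀ _ two_ne_zero, mul_sub, ← exp_add, ← exp_add, neg_add_cancel,
    exp_zero, ← neg_add, add_halves]

lemma thermalGreen_eq (β ε τ : ℝ) :
    (exp (-τ * ε) + exp ((τ - β) * ε)) / (2 * ε * (1 - exp (-β * ε))) = thermalGreen β ε τ := by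
  rw [exp_add_exp_eq_cosh, neg_mul, one_sub_exp_neg_eq_sinh, thermalGreen, mul_left_comm (2 * ε),
    mul_div_mul_left _ _ (exp_pos _).ne', mul_left_comm (2 * ε), mul_div_mul_left _ _ two_ne_zero]

lemma hasDerivAt_thermalGreen (β ε τ : ℝ) :
    HasDerivAt (thermalGreen β ε) (thermalGreenDeriv β ε τ) τ := by
  have := (((hasDerivAt_id τ).sub_const (β / 2)).mul_const ε).cosh.div_const
    (2 * ε * sinh (β * ε / 2))
  exact this.congr_deriv (by simp [thermalGreenDeriv, mul_comm])

lemma hasDerivAt_thermalGreenDeriv (β ε τ : ℝ) :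
    HasDerivAt (thermalGreenDeriv β ε) (ε ^ 2 * thermalGreen β ε τ) τ := by
  have := ((((hasDerivAt_id τ).sub_const (β / 2)).mul_const ε).sinh.const_mul ε).div_const
    (2 * ε * sinh (β * ε / 2))
  exact this.congr_deriv (by simp only [thermalGreen, id]; ring)

lemma continuous_thermalGreen (β ε : ℝ) : Continuous (thermalGreen β ε) := by
  unfold thermalGreen; fun_prop

lemma sq_mul_thermalGreen_zero {β ε : ℝ} (hε : ε ≠ 0) :
    ε ^ 2 * thermalGreen β ε 0 = ε / 2 * (cosh (β * ε / 2) / sinh (β * ε / 2)) := by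
  rw [thermalGreen, show (0 - β / 2) * ε = -(β * ε / 2) by ring, cosh_neg]
  field_simp

lemma sq_mul_thermalGreen_half {β ε : ℝ} (hε : ε ≠ 0) :
    ε ^ 2 * thermalGreen β ε (β / 2) = ε / (2 * sinh (β * ε / 2)) := by
  rw [thermalGreen, sub_self, zero_mul, cosh_zero]
  field_simp

theorem stmt3_general (β ε : ℝ) (hε : 0 < ε) (F : ℝ → ℝ)
    (hF : ∀ τ ∈ Set.Ico (0:ℝ) β,
      F τ = (Real.exp (-τ * ε) + Real.exp ((τ - β) * ε)) / (2 * ε * (1 - Real.exp (-β * ε)))) :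
    ∃ F' F'' : ℝ → ℝ,
      (∀ τ ∈ Set.Ioo (0:ℝ) β, HasDerivAt F (F' τ) τ) ∧
      (∀ τ ∈ Set.Ioo (0:ℝ) β, HasDerivAt F' (F'' τ) τ) ∧
      (∀ τ ∈ Set.Ioo (0:ℝ) β, F'' τ = ε ^ 2 * F τ) ∧
      Tendsto F'' (nhdsWithin 0 (Set.Ioi 0))
        (nhds (ε / 2 * (Real.cosh (β * ε / 2) / Real.sinh (β * ε / 2)))) ∧
      F'' (β / 2) = ε / (2 * Real.sinh (β * ε / 2)) := by
  have hFG : ∀ τ ∈ Set.Ioo 0 β, F τ = thermalGreen β ε τ := fun τ hτ => by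
    rw [hF τ (Set.Ioo_subset_Ico_self hτ), thermalGreen_eq]
  refine ⟨thermalGreenDeriv β ε, fun τ => ε ^ 2 * thermalGreen β ε τ, fun τ hτ => ?_,
    fun τ _ => hasDerivAt_thermalGreenDeriv β ε τ, fun τ hτ => by rw [hFG τ hτ], ?_,
    sq_mul_thermalGreen_half hε.ne'⟩
  · exact (hasDerivAt_thermalGreen β ε τ).congr_of_eventuallyEq
      (eventuallyEq_of_mem (isOpen_Ioo.mem_nhds hτ) hFG)
  · rw [← sq_mul_thermalGreen_zero hε.ne']
    exact (((continuous_thermalGreen β ε).const_mul _).tendsto 0).mono_left nhdsWithin_le_nhds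

/-- `F` is twice differentiable on `(0, β)` and satisfies `F″ τ = ε² F τ` for
`τ ∈ (0, β)`; moreover `lim_{τ→0⁺} F″ τ = (ε/2)·coth(βε/2)` and `F″ (β/2) = ε/(2 sinh(βε/2))`. -/
theorem stmt3 (β ε : ℝ) (hβ : 0 < β) (hε : 0 < ε) (F : ℝ → ℝ)
    (hper : Function.Periodic F β)
    (hF : ∀ τ ∈ Set.Ico (0:ℝ) β,
      F τ = (Real.exp (-τ * ε) + Real.exp ((τ - β) * ε)) / (2 * ε * (1 - Real.exp (-β * ε)))) :
    ∃ F' F'' : ℝ → ℝ,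
      (∀ τ ∈ Set.Ioo (0:ℝ) β, HasDerivAt F (F' τ) τ) ∧
      (∀ τ ∈ Set.Ioo (0:ℝ) β, HasDerivAt F' (F'' τ) τ) ∧
      (∀ τ ∈ Set.Ioo (0:ℝ) β, F'' τ = ε ^ 2 * F τ) ∧
      Tendsto F'' (nhdsWithin 0 (Set.Ioi 0))
        (nhds (ε / 2 * (Real.cosh (β * ε / 2) / Real.sinh (β * ε / 2)))) ∧
      F'' (β / 2) = ε / (2 * Real.sinh (β * ε / 2)) :=
  stmt3_general β ε hε F hF
end

section
/- For every continuous β-periodic function u : ℝ → ℝ, the function v(τ) = ∫₀^β F(τ − σ) u(σ) dσ is twice continuously differentiable, β-periodic, and satisfies −v″(τ) + ε² v(τ) = u(τ) for all τ ∈ ℝ. In other words, convolution with F on the circle of length β inverts the operator −∂τ² + ε² on β-periodic functions. -/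
open MeasureTheory intervalIntegral

/-!
On the window `σ ∈ [τ - β, τ]` the periodic kernel `F (τ - σ)` is given by the explicit formula,
a combination of `exp (∓ε (τ - σ))`. So `v` is a combination of the exponential windows
`W_k τ = ∫_{τ-β}^τ exp (k (τ - σ)) u σ dσ`, `k = ±ε`, and differentiating under the moving limits
with `u (τ - β) = u τ` gives `W_k' = k W_k + (1 - exp (k β)) u`. In `v'` the `u`-terms cancel,
in `v''` they add up to `-u`, while the `W_k`-terms reproduce `ε² v`.
-/

open Real Function

noncomputable section

def greenKernel (β ε t : ℝ) : ℝ :=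
  (exp (-t * ε) + exp ((t - β) * ε)) / (2 * ε * (1 - exp (-β * ε)))

def greenConv (β ε : ℝ) (u : ℝ → ℝ) (τ : ℝ) : ℝ :=
  ∫ σ in (τ - β)..τ, greenKernel β ε (τ - σ) * u σ

def expWindow (β k : ℝ) (u : ℝ → ℝ) (τ : ℝ) : ℝ :=
  ∫ σ in (τ - β)..τ, exp (k * (τ - σ)) * u σ

end

theorem hasDerivAt_integral_sub_const_self {E : Type*} [NormedAddCommGroup E] [NormedSpace ℝ E]
    [CompleteSpace E] {g : ℝ → E} (hg : Continuous g) (T x : ℝ) :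
    HasDerivAt (fun t => ∫ s in (t - T)..t, g s) (g x - g (x - T)) x := by
  have hsplit : (fun t => ∫ s in (t - T)..t, g s) =
      fun t => (∫ s in (0 : ℝ)..t, g s) - ∫ s in (0 : ℝ)..(t - T), g s := by
    funext t
    exact (integral_interval_sub_left (hg.intervalIntegrable _ _) (hg.intervalIntegrable _ _)).symm
  rw [hsplit]
  exact (hg.integral_hasStrictDerivAt 0 x).hasDerivAt.sub
    ((hg.integral_hasStrictDerivAt 0 (x - T)).hasDerivAt.comp_sub_const x T)

theorem contDiff_two_of_hasDerivAt_deriv {𝕜 F : Type*} [NontriviallyNormedField 𝕜]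
    [NormedAddCommGroup F] [NormedSpace 𝕜 F] {f f'' : 𝕜 → F} (hf : Differentiable 𝕜 f)
    (hf' : ∀ x, HasDerivAt (deriv f) (f'' x) x) (hf'' : Continuous f'') : ContDiff 𝕜 2 f := by
  rw [show (2 : WithTop ℕ∞) = 1 + 1 from rfl, contDiff_succ_iff_deriv, contDiff_one_iff_deriv]
  refine ⟨hf, by simp, fun x => (hf' x).differentiableAt, ?_⟩
  rwa [show deriv (deriv f) = f'' from funext fun x => (hf' x).deriv]

theorem expWindow_eq_exp_mul_integral (β k : ℝ) (u : ℝ → ℝ) (τ : ℝ) :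
    expWindow β k u τ = exp (k * τ) * ∫ σ in (τ - β)..τ, exp (-(k * σ)) * u σ := by
  rw [expWindow, ← intervalIntegral.integral_const_mul]
  congr 1 with σ
  rw [mul_sub, sub_eq_add_neg, exp_add, mul_assoc]

theorem hasDerivAt_expWindow {β : ℝ} {u : ℝ → ℝ} (hu : Continuous u) (hper : Periodic u β)
    (k τ : ℝ) :
    HasDerivAt (expWindow β k u) (k * expWindow β k u τ + (1 - exp (k * β)) * u τ) τ := by
  have hwindow := hasDerivAt_integral_sub_const_self
    (show Continuous fun σ => exp (-(k * σ)) * u σ by fun_prop) β τ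
  have hexp : HasDerivAt (fun t => exp (k * t)) (exp (k * τ) * k) τ :=
    ((hasDerivAt_id' τ).const_mul k).exp.congr_deriv (by ring)
  rw [funext (expWindow_eq_exp_mul_integral β k u)]
  refine (hexp.mul hwindow).congr_deriv ?_
  rw [hper.sub_eq]
  have h1 : exp (k * τ) * exp (-(k * τ)) = 1 := by rw [← exp_add, add_neg_cancel, exp_zero]
  have h2 : exp (k * τ) * exp (-(k * (τ - β))) = exp (k * β) := by rw [← exp_add]; ring_nf
  linear_combination u τ * h1 - u τ * h2

theorem greenConv_eq_expWindow {u : ℝ → ℝ} (hu : Continuous u) (β ε τ : ℝ) :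
    greenConv β ε u τ = (expWindow β (-ε) u τ + exp (-β * ε) * expWindow β ε u τ) /
      (2 * ε * (1 - exp (-β * ε))) := by
  have hsplit : ∀ σ, greenKernel β ε (τ - σ) * u σ =
      (exp (-ε * (τ - σ)) * u σ + exp (-β * ε) * (exp (ε * (τ - σ)) * u σ)) /
        (2 * ε * (1 - exp (-β * ε))) := by
    intro σ
    rw [greenKernel, show (τ - σ - β) * ε = -β * ε + ε * (τ - σ) by ring, exp_add,
      show -(τ - σ) * ε = -ε * (τ - σ) by ring]
    ring
  rw [greenConv, integral_congr fun σ _ => hsplit σ, intervalIntegral.integral_div,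
    intervalIntegral.integral_add ((by fun_prop : Continuous _).intervalIntegrable _ _)
      ((by fun_prop : Continuous _).intervalIntegrable _ _), intervalIntegral.integral_const_mul]
  rfl

theorem hasDerivAt_greenConv {β : ℝ} {u : ℝ → ℝ} (hu : Continuous u) (hper : Periodic u β)
    (ε τ : ℝ) :
    HasDerivAt (greenConv β ε u)
      (ε * (exp (-β * ε) * expWindow β ε u τ - expWindow β (-ε) u τ) /
        (2 * ε * (1 - exp (-β * ε)))) τ := by
  rw [funext (greenConv_eq_expWindow hu β ε)]
  refine (((hasDerivAt_expWindow hu hper (-ε) τ).add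
    ((hasDerivAt_expWindow hu hper ε τ).const_mul _)).div_const _).congr_deriv ?_
  have hq : exp (-ε * β) = exp (-β * ε) := by ring_nf
  have hinv : exp (-β * ε) * exp (ε * β) = 1 := by rw [← exp_add]; ring_nf; exact exp_zero
  congr 1
  linear_combination -u τ * hq - u τ * hinv

theorem hasDerivAt_deriv_greenConv {β ε : ℝ} (hβ : β ≠ 0) (hε : ε ≠ 0) {u : ℝ → ℝ}
    (hu : Continuous u) (hper : Periodic u β) (τ : ℝ) :
    HasDerivAt (deriv (greenConv β ε u)) (ε ^ 2 * greenConv β ε u τ - u τ) τ := by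
  have hden : 1 - exp (-β * ε) ≠ 0 :=
    sub_ne_zero.2 (Ne.symm ((exp_eq_one_iff _).not.2 (mul_ne_zero (neg_ne_zero.2 hβ) hε)))
  rw [funext fun t => (hasDerivAt_greenConv hu hper ε t).deriv, greenConv_eq_expWindow hu]
  refine (((((hasDerivAt_expWindow hu hper ε τ).const_mul _).sub
    (hasDerivAt_expWindow hu hper (-ε) τ)).const_mul ε).div_const _).congr_deriv ?_
  have hinv : exp (-β * ε) * exp (ε * β) = 1 := by rw [← exp_add]; ring_nf; exact exp_zero
  rw [show exp (-ε * β) = exp (-β * ε) by ring_nf]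
  set q := exp (-β * ε)
  set p := exp (ε * β)
  field_simp
  linear_combination -u τ * hinv

theorem eq_greenKernel_of_mem_Icc {β ε : ℝ} (hβ : 0 < β) {F : ℝ → ℝ} (hper : Periodic F β)
    (hF : ∀ t ∈ Set.Ico 0 β, F t = greenKernel β ε t) {t : ℝ} (ht : t ∈ Set.Icc 0 β) :
    F t = greenKernel β ε t := by
  rcases ht.2.lt_or_eq with hlt | rfl
  · exact hF t ⟨ht.1, hlt⟩
  · -- `F β = F 0`, and the formula takes the same value at `0` and at `β`
    rw [← zero_add t, hper, hF 0 ⟨le_rfl, hβ⟩, greenKernel, greenKernel]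
    ring_nf

theorem integral_mul_eq_greenConv {β ε : ℝ} (hβ : 0 < β) {F u : ℝ → ℝ} (hper : Periodic F β)
    (hF : ∀ t ∈ Set.Ico 0 β, F t = greenKernel β ε t) (huper : Periodic u β) (τ : ℝ) :
    ∫ σ in (0 : ℝ)..β, F (τ - σ) * u σ = greenConv β ε u τ := by
  have hperiodic : Periodic (fun σ => F (τ - σ) * u σ) β := fun σ => by
    simp only [sub_add_eq_sub_sub, hper.sub_eq, huper σ]
  have hshift := hperiodic.intervalIntegral_add_eq 0 (τ - β)
  rw [zero_add, sub_add_cancel] at hshift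
  rw [hshift, greenConv]
  refine integral_congr fun σ hσ => ?_
  rw [Set.uIcc_of_le (by linarith)] at hσ
  rw [eq_greenKernel_of_mem_Icc hβ hper hF (t := τ - σ) ⟨by linarith [hσ.2], by linarith [hσ.1]⟩]

/-- for every continuous β-periodic `u`, the function
`v τ = ∫₀^β F(τ − σ) u σ dσ` is twice continuously differentiable, β-periodic, and satisfies
`−v″ + ε² v = u` everywhere: convolution with `F` on the circle of length `β` inverts
`−∂τ² + ε²` on β-periodic functions. -/
theorem stmt4 (β ε : ℝ) (hβ : 0 < β) (hε : 0 < ε) (F : ℝ → ℝ)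
    (hper : Function.Periodic F β)
    (hF : ∀ τ ∈ Set.Ico (0:ℝ) β,
      F τ = (Real.exp (-τ * ε) + Real.exp ((τ - β) * ε)) / (2 * ε * (1 - Real.exp (-β * ε))))
    (u : ℝ → ℝ) (hu : Continuous u) (huper : Function.Periodic u β)
    (v : ℝ → ℝ) (hv : ∀ τ : ℝ, v τ = ∫ σ in (0:ℝ)..β, F (τ - σ) * u σ) :
    ContDiff ℝ 2 v ∧ Function.Periodic v β ∧
    ∀ τ : ℝ, -(deriv (deriv v) τ) + ε ^ 2 * v τ = u τ := by
  have hv_eq : v = greenConv β ε u :=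
    funext fun τ => (hv τ).trans (integral_mul_eq_greenConv hβ hper hF huper τ)
  have hv_diff : Differentiable ℝ v :=
    hv_eq ▸ fun τ => (hasDerivAt_greenConv hu huper ε τ).differentiableAt
  have hv'' : ∀ τ, HasDerivAt (deriv v) (ε ^ 2 * v τ - u τ) τ :=
    hv_eq ▸ hasDerivAt_deriv_greenConv hβ.ne' hε.ne' hu huper
  refine ⟨contDiff_two_of_hasDerivAt_deriv hv_diff hv''
    ((continuous_const.mul hv_diff.continuous).sub hu), fun τ => ?_,
    fun τ => by rw [(hv'' τ).deriv]; ring⟩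
  rw [hv, hv]
  exact integral_congr fun σ _ => by rw [add_sub_right_comm, hper]
end

section
/- Let B ⊆ ℝⁿ be a closed set with empty interior, and let Λ be a linear map from the space of smooth compactly supported real-valued functions on ℝⁿ to the space of continuous real-valued functions on ℝⁿ such that: (i) ∫ (Λf)·g dx = ∫ f·(Λg) dx for all smooth compactly supported f, g (symmetry with respect to the L² pairing), and (ii) ∫ (Λf)·g dx = 0 whenever both supp f and supp g are contained in ℝⁿ \ B. Then Λf = 0 for every smooth compactly supported f. -/
open MeasureTheory

/-- A continuous function orthogonal to all smooth test functions supported in the complement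
of a closed set with empty interior vanishes identically. -/
lemma aux_vanish (n : ℕ) (B : Set (Fin n → ℝ)) (hBclosed : IsClosed B)
    (hBint : interior B = ∅) (h : (Fin n → ℝ) → ℝ) (hc : Continuous h)
    (hint : ∀ g : (Fin n → ℝ) → ℝ, ContDiff ℝ (⊤ : ℕ∞) g → HasCompactSupport g →
      tsupport g ⊆ Bᶜ → ∫ x, h x * g x = 0) : h = 0 := by
  have hU : IsOpen Bᶜ := hBclosed.isOpen_compl
  have hae : ∀ᵐ x : (Fin n → ℝ), x ∈ Bᶜ → h x = 0 := by
    apply hU.ae_eq_zero_of_integral_contDiff_smul_eq_zero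
      (hc.locallyIntegrable.locallyIntegrableOn _)
    intro g hg hgs hgsup
    have := hint g hg hgs hgsup
    simpa [smul_eq_mul, mul_comm] using this
  -- h = 0 on Bᶜ
  have hzero : ∀ x ∈ Bᶜ, h x = 0 := by
    intro x hx
    by_contra hne
    have hV : IsOpen (Bᶜ ∩ h ⁻¹' {0}ᶜ) := hU.inter (isOpen_compl_singleton.preimage hc)
    have hVpos : 0 < volume (Bᶜ ∩ h ⁻¹' {0}ᶜ) :=
      hV.measure_pos volume ⟨x, hx, hne⟩
    have hsub : (Bᶜ ∩ h ⁻¹' {0}ᶜ) ⊆ {y | ¬ (y ∈ Bᶜ → h y = 0)} := by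
      intro y hy hcon
      exact hy.2 (hcon hy.1)
    have : volume {y | ¬ (y ∈ Bᶜ → h y = 0)} = 0 := hae
    exact absurd (measure_mono_null hsub this) hVpos.ne'
  -- Bᶜ is dense
  have hdense : Dense (Bᶜ : Set (Fin n → ℝ)) := by
    rw [dense_iff_closure_eq, closure_compl, hBint, Set.compl_empty]
  have := Continuous.ext_on hdense hc continuous_const (fun x hx => hzero x hx)
  funext x
  simpa using congrFun this x

/-- let `B ⊆ ℝⁿ` be closed with empty interior and let `Λ` be a linear map from
smooth compactly supported functions to continuous functions which is symmetric for the L²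
pairing and satisfies `∫ (Λf)·g = 0` whenever `f` and `g` are both supported in `ℝⁿ \ B`.
Then `Λ f = 0` for every smooth compactly supported `f`. -/
theorem stmt11 (n : ℕ) (B : Set (Fin n → ℝ)) (hBclosed : IsClosed B)
    (hBint : interior B = ∅)
    (Λ : ((Fin n → ℝ) → ℝ) → ((Fin n → ℝ) → ℝ))
    (hadd : ∀ f g : (Fin n → ℝ) → ℝ,
      ContDiff ℝ (⊤ : ℕ∞) f → HasCompactSupport f →
      ContDiff ℝ (⊤ : ℕ∞) g → HasCompactSupport g →
      Λ (f + g) = Λ f + Λ g)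
    (hsmul : ∀ (c : ℝ) (f : (Fin n → ℝ) → ℝ),
      ContDiff ℝ (⊤ : ℕ∞) f → HasCompactSupport f → Λ (c • f) = c • Λ f)
    (hcont : ∀ f : (Fin n → ℝ) → ℝ,
      ContDiff ℝ (⊤ : ℕ∞) f → HasCompactSupport f → Continuous (Λ f))
    (hsym : ∀ f g : (Fin n → ℝ) → ℝ,
      ContDiff ℝ (⊤ : ℕ∞) f → HasCompactSupport f →
      ContDiff ℝ (⊤ : ℕ∞) g → HasCompactSupport g →
      ∫ x, Λ f x * g x = ∫ x, f x * Λ g x)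
    (hvan : ∀ f g : (Fin n → ℝ) → ℝ,
      ContDiff ℝ (⊤ : ℕ∞) f → HasCompactSupport f →
      ContDiff ℝ (⊤ : ℕ∞) g → HasCompactSupport g →
      tsupport f ⊆ Bᶜ → tsupport g ⊆ Bᶜ →
      ∫ x, Λ f x * g x = 0) :
    ∀ f : (Fin n → ℝ) → ℝ,
      ContDiff ℝ (⊤ : ℕ∞) f → HasCompactSupport f → Λ f = 0 := by
  -- Step 1: Λ g = 0 for g supported in Bᶜ
  have step1 : ∀ g : (Fin n → ℝ) → ℝ, ContDiff ℝ (⊤ : ℕ∞) g → HasCompactSupport g →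
      tsupport g ⊆ Bᶜ → Λ g = 0 := by
    intro g hg hgs hgsup
    apply aux_vanish n B hBclosed hBint _ (hcont g hg hgs)
    intro g' hg' hgs' hgsup'
    exact hvan g g' hg hgs hg' hgs' hgsup hgsup'
  -- Step 2: general f
  intro f hf hfs
  apply aux_vanish n B hBclosed hBint _ (hcont f hf hfs)
  intro g hg hgs hgsup
  rw [hsym f g hf hfs hg hgs, step1 g hg hgs hgsup]
  simp
end

section
/- Let H be a complex Hilbert space, β > 0, and let ε be a bounded selfadjoint operator on H with spectrum contained in [m, ∞) for some m > 0. For s ∈ [0, β] define the bounded operator F(s) = f_s(ε) by the continuous functional calculus, where f_s(x) = (exp(−sx) + exp((s−β)x)) / (2x(1 − exp(−βx))), and define g(ε) by g(x) = (2x(1 − exp(−βx)))⁻¹. Then for every continuous function u : [0, β/2] → H, setting u₀ = ∫₀^{β/2} exp(−σε)u(σ) dσ and u_β = ∫₀^{β/2} exp((σ − β/2)ε)u(σ) dσ (Bochner integrals, with exp(−tε) defined by the functional calculus), one has ∫₀^{β/2} ∫₀^{β/2} ⟨u(σ), F(σ + τ)u(τ)⟩ dτ dσ = ⟨u₀, g(ε)u₀⟩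 + ⟨u_β, g(ε)u_β⟩, and in particular this double integral is a nonnegative real number. -/
open MeasureTheory intervalIntegral
open scoped InnerProductSpace

/-!
Both exponentials in the numerator of `f_{σ+τ}` factor, `e^{-(σ+τ)x} = e^{-σx} e^{-τx}` and
`e^{(σ+τ-β)x} = e^{-(β/2-σ)x} e^{-(β/2-τ)x}`, so by the functional calculus
`F(σ+τ) = e^{-σε} g e^{-τε} + e^{-(β/2-σ)ε} g e^{-(β/2-τ)ε}`. Since the exponentials are
selfadjoint, the double integral separates into `⟪u₀, g u₀⟫ + ⟪u_β, g u_β⟫`, and `g ≥ 0` because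
its symbol is positive on the spectrum.
-/

section InnerIntegral

variable {𝕜 E : Type*} [RCLike 𝕜] [NormedAddCommGroup E] [InnerProductSpace 𝕜 E]
  [NormedSpace ℝ E] [CompleteSpace E] {μ : Measure ℝ} {a b : ℝ}

lemma intervalIntegral_inner_clm_apply (T : E →L[𝕜] E) {w : ℝ → E}
    (hw : IntervalIntegrable w μ a b) (x : E) :
    ∫ τ in a..b, ⟪x, T (w τ)⟫_𝕜 ∂μ = ⟪x, T (∫ τ in a..b, w τ ∂μ)⟫_𝕜 :=
  ((innerSL 𝕜 x).comp T).intervalIntegral_comp_comm hw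

lemma intervalIntegral_inner_const {v : ℝ → E} (hv : IntervalIntegrable v μ a b) (y : E) :
    ∫ σ in a..b, ⟪v σ, y⟫_𝕜 ∂μ = ⟪∫ σ in a..b, v σ ∂μ, y⟫_𝕜 := by
  calc ∫ σ in a..b, ⟪v σ, y⟫_𝕜 ∂μ
      = ∫ σ in a..b, (starRingEnd 𝕜) ⟪y, v σ⟫_𝕜 ∂μ := by simp only [inner_conj_symm]
    _ = (starRingEnd 𝕜) ⟪y, ∫ σ in a..b, v σ ∂μ⟫_𝕜 := by
      rw [intervalIntegral_conj]
      exact congrArg _ ((innerSL 𝕜 y).intervalIntegral_comp_comm hv)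
    _ = ⟪∫ σ in a..b, v σ ∂μ, y⟫_𝕜 := inner_conj_symm _ _

lemma intervalIntegral_intervalIntegral_inner_add (T : E →L[𝕜] E) {v w : ℝ → E}
    (hv : IntervalIntegrable v μ a b) (hw : IntervalIntegrable w μ a b) :
    ∫ σ in a..b, ∫ τ in a..b, (⟪v σ, T (v τ)⟫_𝕜 + ⟪w σ, T (w τ)⟫_𝕜) ∂μ ∂μ =
      ⟪∫ σ in a..b, v σ ∂μ, T (∫ σ in a..b, v σ ∂μ)⟫_𝕜 +
        ⟪∫ σ in a..b, w σ ∂μ, T (∫ σ in a..b, w σ ∂μ)⟫_𝕜 := by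
  have hcomp : ∀ {f : ℝ → E}, IntervalIntegrable f μ a b → ∀ x : E,
      IntervalIntegrable (fun τ => ⟪x, T (f τ)⟫_𝕜) μ a b := fun hf x =>
    ⟨((innerSL 𝕜 x).comp T).integrable_comp hf.1, ((innerSL 𝕜 x).comp T).integrable_comp hf.2⟩
  have hinner : ∀ σ, ∫ τ in a..b, (⟪v σ, T (v τ)⟫_𝕜 + ⟪w σ, T (w τ)⟫_𝕜) ∂μ =
      ⟪v σ, T (∫ τ in a..b, v τ ∂μ)⟫_𝕜 + ⟪w σ, T (∫ τ in a..b, w τ ∂μ)⟫_𝕜 := fun σ => by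
    rw [integral_add (hcomp hv _) (hcomp hw _), intervalIntegral_inner_clm_apply T hv,
      intervalIntegral_inner_clm_apply T hw]
  simp only [hinner]
  have hconst : ∀ {f : ℝ → E}, IntervalIntegrable f μ a b → ∀ y : E,
      IntervalIntegrable (fun σ => ⟪f σ, y⟫_𝕜) μ a b := fun hf y =>
    ⟨hf.1.inner_const y, hf.2.inner_const y⟩
  rw [integral_add (hconst hv _) (hconst hw _), intervalIntegral_inner_const hv,
    intervalIntegral_inner_const hw]

end InnerIntegral

noncomputable def thermalWeight (β x : ℝ) : ℝ := (2 * x * (1 - Real.exp (-β * x)))⁻¹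

lemma thermalWeight_pos {β x : ℝ} (hβ : 0 < β) (hx : 0 < x) : 0 < thermalWeight β x := by
  have hexp : Real.exp (-β * x) < 1 := Real.exp_lt_one_iff.mpr (by nlinarith)
  have hden : 0 < 2 * x * (1 - Real.exp (-β * x)) := by nlinarith
  exact inv_pos.mpr hden

lemma continuousOn_thermalWeight {β : ℝ} (hβ : 0 < β) {s : Set ℝ} (hs : ∀ x ∈ s, 0 < x) :
    ContinuousOn (thermalWeight β) s :=
  ContinuousOn.inv₀ (by fun_prop) fun x hx h => (thermalWeight_pos hβ (hs x hx)).ne' <| by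
    rw [thermalWeight, h, inv_zero]

section ExpNeg

variable {H : Type*} [NormedAddCommGroup H] [InnerProductSpace ℂ H] [CompleteSpace H]
  {ε : H →L[ℂ] H}

variable (ε) in
noncomputable def expNeg (σ : ℝ) : H →L[ℂ] H := cfc (fun x : ℝ => Real.exp (-σ * x)) ε

lemma isSelfAdjoint_expNeg (σ : ℝ) : IsSelfAdjoint (expNeg ε σ) := cfc_predicate _ ε

lemma continuous_expNeg (hε : IsSelfAdjoint ε) : Continuous (expNeg ε) := by
  let E : C(ℝ, C(spectrum ℝ ε, ℝ)) :=
    ContinuousMap.curry ⟨fun p : ℝ × spectrum ℝ ε => Real.exp (-p.1 * p.2), by fun_prop⟩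
  have hE : expNeg ε = fun σ => cfcHom hε (E σ) := by
    funext σ
    rw [expNeg, cfc_apply _ ε hε (by fun_prop)]
    rfl
  rw [hE]
  exact (cfcHom_isClosedEmbedding hε).continuous.comp E.continuous

lemma expNeg_mul_cfc_mul_expNeg {h : ℝ → ℝ} (hh : ContinuousOn h (spectrum ℝ ε)) (σ τ : ℝ) :
    expNeg ε σ * (cfc h ε * expNeg ε τ) =
      cfc (fun x => Real.exp (-σ * x) * (h x * Real.exp (-τ * x))) ε := by
  rw [expNeg, expNeg, ← cfc_mul h (fun x => Real.exp (-τ * x)) ε hh (by fun_prop),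
    ← cfc_mul (fun x => Real.exp (-σ * x)) (fun x => h x * Real.exp (-τ * x)) ε (by fun_prop)
      (hh.mul (by fun_prop))]

lemma cfc_thermalKernel_eq {β : ℝ} (hw : ContinuousOn (thermalWeight β) (spectrum ℝ ε)) (σ τ : ℝ) :
    cfc (fun x : ℝ =>
        (Real.exp (-(σ + τ) * x) + Real.exp ((σ + τ - β) * x)) / (2 * x * (1 - Real.exp (-β * x))))
        ε =
      expNeg ε σ * (cfc (thermalWeight β) ε * expNeg ε τ) +
        expNeg ε (β / 2 - σ) * (cfc (thermalWeight β) ε * expNeg ε (β / 2 - τ)) := by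
  have hcont : ∀ s t : ℝ, ContinuousOn
      (fun x => Real.exp (-s * x) * (thermalWeight β x * Real.exp (-t * x))) (spectrum ℝ ε) :=
    fun s t => (by fun_prop : ContinuousOn (fun x => Real.exp (-s * x)) _).mul
      (hw.mul (by fun_prop))
  rw [expNeg_mul_cfc_mul_expNeg hw, expNeg_mul_cfc_mul_expNeg hw,
    ← cfc_add (a := ε) _ _ (hcont σ τ) (hcont (β / 2 - σ) (β / 2 - τ))]
  refine cfc_congr fun x _ => ?_
  have h₁ : Real.exp (-(σ + τ) * x) = Real.exp (-σ * x) * Real.exp (-τ * x) := by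
    rw [← Real.exp_add]; ring_nf
  have h₂ : Real.exp ((σ + τ - β) * x) =
      Real.exp (-(β / 2 - σ) * x) * Real.exp (-(β / 2 - τ) * x) := by
    rw [← Real.exp_add]; ring_nf
  rw [div_eq_mul_inv, h₁, h₂, thermalWeight]
  ring

lemma inner_cfc_thermalKernel {β : ℝ} (hw : ContinuousOn (thermalWeight β) (spectrum ℝ ε))
    (σ τ : ℝ) (x y : H) :
    ⟪x, cfc (fun t : ℝ =>
        (Real.exp (-(σ + τ) * t) + Real.exp ((σ + τ - β) * t)) / (2 * t * (1 - Real.exp (-β * t))))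
        ε y⟫_ℂ =
      ⟪expNeg ε σ x, cfc (thermalWeight β) ε (expNeg ε τ y)⟫_ℂ +
        ⟪expNeg ε (β / 2 - σ) x, cfc (thermalWeight β) ε (expNeg ε (β / 2 - τ) y)⟫_ℂ := by
  rw [cfc_thermalKernel_eq hw, add_apply, inner_add_right]
  exact congrArg₂ (· + ·) ((isSelfAdjoint_expNeg σ).isSymmetric _ _).symm
    ((isSelfAdjoint_expNeg (β / 2 - σ)).isSymmetric _ _).symm

end ExpNeg

/-- reflection positivity at the operator level. For a bounded selfadjoint
operator `ε` on a complex Hilbert space with spectrum in `[m, ∞)`, `m > 0`, with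
`F(s) = f_s(ε)` for `f_s(x) = (e^{−sx} + e^{(s−β)x})/(2x(1 − e^{−βx}))` and
`g(x) = (2x(1 − e^{−βx}))⁻¹` given by the continuous functional calculus, for every continuous
`u : [0, β/2] → H` one has, with `u₀ = ∫₀^{β/2} e^{−σε} u(σ) dσ` and
`u_β = ∫₀^{β/2} e^{(σ−β/2)ε} u(σ) dσ`:
`∫₀^{β/2}∫₀^{β/2} ⟨u(σ), F(σ+τ) u(τ)⟩ dτ dσ = ⟨u₀, g(ε) u₀⟩ + ⟨u_β, g(ε) u_β⟩ ≥ 0`. -/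
theorem stmt12 {H : Type*} [NormedAddCommGroup H] [InnerProductSpace ℂ H] [CompleteSpace H]
    (β m : ℝ) (hβ : 0 < β) (hm : 0 < m)
    (ε : H →L[ℂ] H) (hε : IsSelfAdjoint ε) (hspec : spectrum ℝ ε ⊆ Set.Ici m)
    (F : ℝ → H →L[ℂ] H)
    (hFdef : ∀ s ∈ Set.Icc (0:ℝ) β,
      F s = cfc (fun x : ℝ =>
        (Real.exp (-s * x) + Real.exp ((s - β) * x)) / (2 * x * (1 - Real.exp (-β * x)))) ε)
    (g : H →L[ℂ] H)
    (hgdef : g = cfc (fun x : ℝ => (2 * x * (1 - Real.exp (-β * x)))⁻¹) ε)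
    (u : ℝ → H) (hu : ContinuousOn u (Set.Icc 0 (β / 2)))
    (u₀ uβ : H)
    (hu₀ : u₀ = ∫ σ in (0:ℝ)..β / 2, (cfc (fun x : ℝ => Real.exp (-σ * x)) ε) (u σ))
    (huβ : uβ = ∫ σ in (0:ℝ)..β / 2, (cfc (fun x : ℝ => Real.exp ((σ - β / 2) * x)) ε) (u σ)) :
    (∫ σ in (0:ℝ)..β / 2, ∫ τ in (0:ℝ)..β / 2, ⟪u σ, F (σ + τ) (u τ)⟫_ℂ) =
      ⟪u₀, g u₀⟫_ℂ + ⟪uβ, g uβ⟫_ℂ ∧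
    ∃ r : ℝ, 0 ≤ r ∧
      (∫ σ in (0:ℝ)..β / 2, ∫ τ in (0:ℝ)..β / 2, ⟪u σ, F (σ + τ) (u τ)⟫_ℂ) = (r : ℂ) := by
  have hspec_pos : ∀ x ∈ spectrum ℝ ε, 0 < x := fun x hx => hm.trans_le (hspec hx)
  have hg : g = cfc (thermalWeight β) ε := hgdef
  have hβ2 : (0:ℝ) ≤ β / 2 := by positivity
  set v : ℝ → H := fun σ => expNeg ε σ (u σ)
  set w : ℝ → H := fun σ => expNeg ε (β / 2 - σ) (u σ)
  have hv : IntervalIntegrable v volume 0 (β / 2) :=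
    ((continuous_expNeg hε).continuousOn.clm_apply hu).intervalIntegrable_of_Icc hβ2
  have hw : IntervalIntegrable w volume 0 (β / 2) :=
    (((continuous_expNeg hε).comp (continuous_const.sub continuous_id)).continuousOn.clm_apply
      hu).intervalIntegrable_of_Icc hβ2
  have hu₀v : u₀ = ∫ σ in (0:ℝ)..β / 2, v σ := hu₀
  have huβw : uβ = ∫ σ in (0:ℝ)..β / 2, w σ := by simp only [huβ, w, expNeg, neg_sub]
  have hkernel : ∀ σ ∈ Set.uIcc 0 (β / 2), ∀ τ ∈ Set.uIcc 0 (β / 2),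
      ⟪u σ, F (σ + τ) (u τ)⟫_ℂ = ⟪v σ, g (v τ)⟫_ℂ + ⟪w σ, g (w τ)⟫_ℂ := by
    intro σ hσ τ hτ
    rw [Set.uIcc_of_le hβ2] at hσ hτ
    rw [hFdef (σ + τ) ⟨by linarith [hσ.1, hτ.1], by linarith [hσ.2, hτ.2]⟩, hg]
    exact inner_cfc_thermalKernel (continuousOn_thermalWeight hβ hspec_pos) σ τ _ _
  have hsplit : (∫ σ in (0:ℝ)..β / 2, ∫ τ in (0:ℝ)..β / 2, ⟪u σ, F (σ + τ) (u τ)⟫_ℂ) =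
      ⟪u₀, g u₀⟫_ℂ + ⟪uβ, g uβ⟫_ℂ := by
    rw [hu₀v, huβw, ← intervalIntegral_intervalIntegral_inner_add g hv hw]
    exact integral_congr fun σ hσ => integral_congr fun τ hτ => hkernel σ hσ τ hτ
  have hg_pos : g.IsPositive := (ContinuousLinearMap.nonneg_iff_isPositive g).mp <|
    hg ▸ cfc_nonneg fun x hx => (thermalWeight_pos hβ (hspec_pos x hx)).le
  open scoped ComplexOrder in
  obtain ⟨r, hr, hr_eq⟩ := RCLike.nonneg_iff_exists_ofReal.mp <|
    add_nonneg (hg_pos.inner_nonneg_right u₀) (hg_pos.inner_nonneg_right uβ)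
  exact ⟨hsplit, r, hr, hsplit.trans hr_eq.symm⟩
end
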